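/- Let ν ∈ (−1,0) and 0 ≤ β < 1. Then the equation r I_ν'(r) − βν I_ν(r) = 0 has exactly one root r in (0,∞). Moreover, the function q_ν(r) = r I_ν'(r)/I_ν(r) − βν is strictly increasing on (0,∞), tends to ν(1−β) < 0 as r → 0⁺, and tends to +∞ as r → ∞. -/

import Mathlib

open Complex

/-- The Bessel function of the first kind `J_ν`, defined by its series with
principal-branch complex powers. -/
noncomputable def besselJ (ν : ℝ) (z : ℂ) : ℂ :=
  ∑' n : ℕ, ((-1 : ℂ) ^ n / ((n.factorial : ℂ) * Complex.Gamma ((n : ℂ) + ν + 1))) *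
    (z / 2) ^ (2 * (n : ℂ) + ν)

/-- The modified Bessel function of the first kind `I_ν`. -/
noncomputable def besselI (ν : ℝ) (z : ℂ) : ℂ :=
  ∑' n : ℕ, (1 / ((n.factorial : ℂ) * Complex.Gamma ((n : ℂ) + ν + 1))) *
    (z / 2) ^ (2 * (n : ℂ) + ν)

/-- The normalization `f_ν(z) = exp((1/ν) Log(2^ν Γ(ν+1) J_ν(z)))`. -/
noncomputable def besselF (ν : ℝ) (z : ℂ) : ℂ :=
  Complex.exp ((ν : ℂ)⁻¹ *
    Complex.log ((2 : ℂ) ^ (ν : ℂ) * Complex.Gamma ((ν : ℂ) + 1) * besselJ ν z))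

/-- The normalization `g_ν(z) = 2^ν Γ(ν+1) z^{1-ν} J_ν(z)`. -/
noncomputable def besselG (ν : ℝ) (z : ℂ) : ℂ :=
  (2 : ℂ) ^ (ν : ℂ) * Complex.Gamma ((ν : ℂ) + 1) * z ^ ((1 : ℂ) - ν) * besselJ ν z

/-- The normalization `h_ν(z) = 2^ν Γ(ν+1) z^{1-ν/2} J_ν(√z)`. -/
noncomputable def besselH (ν : ℝ) (z : ℂ) : ℂ :=
  (2 : ℂ) ^ (ν : ℂ) * Complex.Gamma ((ν : ℂ) + 1) * z ^ ((1 : ℂ) - (ν : ℂ) / 2) *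
    besselJ ν (z ^ (1 / 2 : ℂ))

/-- The radius of starlikeness of order `β` of a function `f` analytic near `0`
with `f(0) = 0`, `f'(0) = 1`:
`r*_β(f) = sup { r > 0 : Re[z f'(z)/f(z)] > β for all 0 < |z| < r }`. -/
noncomputable def radiusOfStarlikeness (β : ℝ) (f : ℂ → ℂ) : ℝ :=
  sSup {r : ℝ | 0 < r ∧ ∀ z : ℂ, 0 < ‖z‖ → ‖z‖ < r →
    β < (z * deriv f z / f z).re}

/-! Writing `I_ν(r) = (r/2)^ν S(r²/4)` with `S(x) = ∑ cₙ xⁿ` and `cₙ = 1/(n! Γ(n+ν+1)) > 0`, one gets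
`r I_ν'(r)/I_ν(r) = ν + 2 φ(r²/4)`, where `φ(x) = ∑ n cₙ xⁿ / ∑ cₙ xⁿ` is the mean of `n` under the
weights `cₙ xⁿ`. Increasing `x` tilts these weights towards large `n`, so `φ` is strictly increasing
(Chebyshev's sum inequality), with `φ(0) = 0` and `φ(x) → ∞`. Hence `q_ν` increases from `ν(1-β) < 0`
to `+∞`, and its unique zero comes from the intermediate value theorem. -/

open Filter Topology Set

section EntireSeries

variable {𝕜 : Type*} [RCLike 𝕜] {a : ℕ → 𝕜}

theorem summable_mul_pow_of_summable_norm_mul_pow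
    (ha : ∀ r : ℝ, Summable fun n => ‖a n‖ * r ^ n) (z : 𝕜) :
    Summable fun n => a n * z ^ n :=
  .of_norm <| by simpa only [norm_mul, norm_pow] using ha ‖z‖

theorem summable_norm_natCast_mul_mul_pow
    (ha : ∀ r : ℝ, Summable fun n => ‖a n‖ * r ^ n) (r : ℝ) :
    Summable fun n : ℕ => ‖(n : 𝕜) * a n‖ * r ^ n := by
  refine .of_norm_bounded (ha (2 * |r|)) fun n => ?_
  have hn : (n : ℝ) ≤ 2 ^ n := mod_cast n.lt_two_pow_self.le
  simp only [norm_mul, norm_pow, RCLike.norm_natCast, Real.norm_eq_abs, abs_norm, mul_pow]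
  calc n * ‖a n‖ * |r| ^ n = (n : ℝ) * (‖a n‖ * |r| ^ n) := by ring
    _ ≤ 2 ^ n * (‖a n‖ * |r| ^ n) := by gcongr
    _ = ‖a n‖ * (2 ^ n * |r| ^ n) := by ring

theorem hasDerivAt_tsum_mul_pow (ha : ∀ r : ℝ, Summable fun n => ‖a n‖ * r ^ n) (z : 𝕜) :
    HasDerivAt (fun w => ∑' n, a n * w ^ n) (∑' n, a n * (n * z ^ (n - 1))) z := by
  set R := ‖z‖ + 1
  have hR : 1 ≤ R := le_add_of_nonneg_left (norm_nonneg z)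
  refine hasDerivAt_tsum_of_isPreconnected (summable_norm_natCast_mul_mul_pow ha R)
    Metric.isOpen_ball (convex_ball 0 R).isPreconnected
    (fun n y _ => (hasDerivAt_pow n y).const_mul (a n)) (fun n y hy => ?_)
    (Metric.mem_ball_self (by linarith)) (summable_mul_pow_of_summable_norm_mul_pow ha 0)
    (by simp [R])
  have hy : ‖y‖ ≤ R := (mem_ball_zero_iff.1 hy).le
  calc ‖a n * (n * y ^ (n - 1))‖ = ‖(n : 𝕜) * a n‖ * ‖y‖ ^ (n - 1) := by
        rw [norm_mul, norm_mul, norm_mul, norm_pow]; ring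
    _ ≤ ‖(n : 𝕜) * a n‖ * R ^ n := by
        gcongr
        exact (pow_le_pow_left₀ (norm_nonneg y) hy _).trans (pow_le_pow_right₀ hR (n.sub_le 1))

theorem mul_tsum_mul_natCast_mul_pow_sub_one (z : 𝕜) :
    z * ∑' n, a n * (n * z ^ (n - 1)) = ∑' n, n * a n * z ^ n := by
  rw [← tsum_mul_left]
  congr 1
  ext (_ | n)
  · simp
  · simp only [Nat.cast_succ, Nat.add_sub_cancel, pow_succ]
    ring

end EntireSeries

/-- The mean of the index `n` under the weights `a n * x ^ n`; for `S x = ∑' n, a n * x ^ n` it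
equals `x * S' x / S x`. -/
noncomputable def indexMean (a : ℕ → ℝ) (x : ℝ) : ℝ :=
  (∑' n, n * a n * x ^ n) / ∑' n, a n * x ^ n

theorem indexMean_zero (a : ℕ → ℝ) : indexMean a 0 = 0 := by
  simp [indexMean, zero_pow_eq]

theorem pow_mul_pow_le_pow_mul_pow {x y : ℝ} (hx : 0 ≤ x) (hxy : x ≤ y) {i j : ℕ} (hij : j ≤ i) :
    y ^ j * x ^ i ≤ y ^ i * x ^ j := by
  obtain ⟨k, rfl⟩ := Nat.exists_eq_add_of_le hij
  calc y ^ j * x ^ (j + k) = (y * x) ^ j * x ^ k := by ring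
    _ ≤ (y * x) ^ j * y ^ k := by have := mul_nonneg (hx.trans hxy) hx; gcongr
    _ = y ^ (j + k) * x ^ j := by ring

-- Every term of index `n ≤ N` is at least `-N a n x ^ N`, and the term of index `N + 1` makes up
-- for all of them.
theorem sum_range_sub_mul_mul_pow_nonneg {a : ℕ → ℝ} (ha : ∀ n, 0 ≤ a n) {M x : ℝ} {N : ℕ}
    (hMN : M ≤ N) (hx : 1 ≤ x) (hC : N * ∑ n ∈ Finset.range (N + 1), a n ≤ a (N + 1) * x) :
    0 ≤ ∑ n ∈ Finset.range (N + 2), ((n : ℝ) - M) * (a n * x ^ n) := by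
  have hx0 : 0 ≤ x := zero_le_one.trans hx
  have hhead : -(N * (∑ n ∈ Finset.range (N + 1), a n) * x ^ N) ≤
      ∑ n ∈ Finset.range (N + 1), ((n : ℝ) - M) * (a n * x ^ n) := by
    rw [← neg_mul, ← neg_mul, mul_assoc, Finset.sum_mul, Finset.mul_sum]
    refine Finset.sum_le_sum fun n hn => ?_
    have hn : n ≤ N := Nat.lt_succ_iff.1 (Finset.mem_range.1 hn)
    have := ha n
    have hM : -(N : ℝ) ≤ n - M := by linarith [(n.cast_nonneg : (0 : ℝ) ≤ n)]
    calc -(N : ℝ) * (a n * x ^ N) ≤ -N * (a n * x ^ n) :=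
          mul_le_mul_of_nonpos_left (by gcongr) (neg_nonpos.2 N.cast_nonneg)
      _ ≤ (n - M) * (a n * x ^ n) := mul_le_mul_of_nonneg_right hM (by positivity)
  have hlast : N * (∑ n ∈ Finset.range (N + 1), a n) * x ^ N ≤
      ((N + 1 : ℕ) - M) * (a (N + 1) * x ^ (N + 1)) := by
    have : (1 : ℝ) ≤ (N + 1 : ℕ) - M := by push_cast; linarith
    have := ha (N + 1)
    calc N * (∑ n ∈ Finset.range (N + 1), a n) * x ^ N ≤ a (N + 1) * x * x ^ N := by gcongr
      _ = 1 * (a (N + 1) * x ^ (N + 1)) := by ring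
      _ ≤ _ := by gcongr
  rw [Finset.sum_range_succ]
  linarith

section PositiveCoefficients

variable {a : ℕ → ℝ} (ha_pos : ∀ n, 0 < a n) (ha : ∀ r : ℝ, Summable fun n => ‖a n‖ * r ^ n)
include ha_pos ha

theorem tsum_mul_pow_pos {x : ℝ} (hx : 0 ≤ x) : 0 < ∑' n, a n * x ^ n :=
  (summable_mul_pow_of_summable_norm_mul_pow ha x).tsum_pos
    (fun n => by have := ha_pos n; positivity) 0 (by simpa using ha_pos 0)

theorem continuousAt_indexMean {x : ℝ} (hx : 0 ≤ x) : ContinuousAt (indexMean a) x :=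
  (hasDerivAt_tsum_mul_pow (summable_norm_natCast_mul_mul_pow ha) x).continuousAt.div
    (hasDerivAt_tsum_mul_pow ha x).continuousAt (tsum_mul_pow_pos ha_pos ha hx).ne'

/-- Chebyshev's sum inequality for the weights `a n * y ^ n` and `a n * x ^ n`, whose ratio
increases with `n`; the pair `(1, 0)` makes it strict. -/
theorem tsum_natCast_mul_mul_tsum_lt {x y : ℝ} (hx : 0 ≤ x) (hxy : x < y) :
    (∑' n, n * a n * x ^ n) * ∑' n, a n * y ^ n < (∑' n, n * a n * y ^ n) * ∑' n, a n * x ^ n := by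
  have hS (t : ℝ) : HasSum (fun n => a n * t ^ n) (∑' n, a n * t ^ n) :=
    (summable_mul_pow_of_summable_norm_mul_pow ha t).hasSum
  have hT (t : ℝ) : HasSum (fun n => n * a n * t ^ n) (∑' n, n * a n * t ^ n) :=
    (summable_mul_pow_of_summable_norm_mul_pow (summable_norm_natCast_mul_mul_pow ha) t).hasSum
  have hprod {f g : ℕ → ℝ} {s t : ℝ} (hf : HasSum f s) (hg : HasSum g t) (hf0 : ∀ n, 0 ≤ f n)
      (hg0 : ∀ n, 0 ≤ g n) : HasSum (fun ij : ℕ × ℕ => f ij.1 * g ij.2) (s * t) :=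
    hf.mul hg (hf.summable.mul_of_nonneg hg.summable hf0 hg0)
  have hy : 0 ≤ y := hx.trans hxy.le
  have h0 {t : ℝ} (ht : 0 ≤ t) (n : ℕ) : 0 ≤ a n * t ^ n := by have := ha_pos n; positivity
  have h1 {t : ℝ} (ht : 0 ≤ t) (n : ℕ) : 0 ≤ n * a n * t ^ n := by have := ha_pos n; positivity
  set E : ℕ × ℕ → ℝ := fun ij =>
    ((ij.1 : ℝ) - ij.2) * (a ij.1 * a ij.2 * (y ^ ij.1 * x ^ ij.2 - y ^ ij.2 * x ^ ij.1))
  have hE : HasSum E _ := ((((hprod (hT y) (hS x) (h1 hy) (h0 hx)).sub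
    (hprod (hS y) (hT x) (h0 hy) (h1 hx))).sub (hprod (hT x) (hS y) (h1 hx) (h0 hy))).add
    (hprod (hS x) (hT y) (h0 hx) (h1 hy))).congr_fun fun ij => by simp only [E]; ring
  have hE_nonneg (ij : ℕ × ℕ) : 0 ≤ E ij := by
    have hai := ha_pos ij.1
    have haj := ha_pos ij.2
    rcases le_total ij.2 ij.1 with h | h
    · have := pow_mul_pow_le_pow_mul_pow hx hxy.le h
      have : (ij.2 : ℝ) ≤ ij.1 := mod_cast h
      exact mul_nonneg (by linarith) (mul_nonneg (by positivity) (by linarith))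
    · have := pow_mul_pow_le_pow_mul_pow hx hxy.le h
      have : (ij.1 : ℝ) ≤ ij.2 := mod_cast h
      exact mul_nonneg_of_nonpos_of_nonpos (by linarith)
        (mul_nonpos_of_nonneg_of_nonpos (by positivity) (by linarith))
  have hE10 : 0 < E (1, 0) := by
    have := mul_pos (ha_pos 1) (ha_pos 0)
    simp only [E]
    norm_num
    nlinarith
  have := hE.summable.tsum_pos hE_nonneg (1, 0) hE10
  rw [hE.tsum_eq] at this
  linear_combination this / 2

theorem strictMonoOn_indexMean : StrictMonoOn (indexMean a) (Ici 0) := by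
  intro x hx y hy hxy
  rw [indexMean, indexMean, div_lt_div_iff₀ (tsum_mul_pow_pos ha_pos ha hx)
    (tsum_mul_pow_pos ha_pos ha hy)]
  exact tsum_natCast_mul_mul_tsum_lt ha_pos ha hx hxy


theorem tendsto_indexMean_atTop : Tendsto (indexMean a) atTop atTop := by
  refine tendsto_atTop.2 fun M => ?_
  obtain ⟨N, hMN⟩ := exists_nat_ge M
  filter_upwards [eventually_ge_atTop 1,
    eventually_ge_atTop (N * (∑ n ∈ Finset.range (N + 1), a n) / a (N + 1))] with x hx1 hxC
  have hx0 : 0 ≤ x := zero_le_one.trans hx1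
  have hS := summable_mul_pow_of_summable_norm_mul_pow ha x
  have hT := summable_mul_pow_of_summable_norm_mul_pow (summable_norm_natCast_mul_mul_pow ha) x
  have hterm (n : ℕ) : n * a n * x ^ n - M * (a n * x ^ n) = ((n : ℝ) - M) * (a n * x ^ n) := by
    ring
  rw [indexMean, le_div_iff₀ (tsum_mul_pow_pos ha_pos ha hx0), ← sub_nonneg, ← tsum_mul_left,
    ← hT.tsum_sub (hS.mul_left M), tsum_congr hterm]
  refine (sum_range_sub_mul_mul_pow_nonneg (fun n => (ha_pos n).le) hMN hx1
    ((div_le_iff₀' (ha_pos (N + 1))).1 hxC)).trans <|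
      ((hT.sub (hS.mul_left M)).congr hterm).sum_le_tsum _ fun n hn => ?_
  have : (N + 2 : ℝ) ≤ n := mod_cast not_lt.1 fun h => hn (Finset.mem_range.2 h)
  have := ha_pos n
  exact mul_nonneg (by linarith) (by positivity)

end PositiveCoefficients

noncomputable def besselICoeff (ν : ℝ) (n : ℕ) : ℝ := 1 / (n.factorial * Real.Gamma (n + ν + 1))

section BesselI

variable {ν : ℝ}

theorem besselICoeff_pos (hν : -1 < ν) (n : ℕ) : 0 < besselICoeff ν n := by
  have := Real.Gamma_pos_of_pos (by linarith [n.cast_nonneg (α := ℝ)] : 0 < n + ν + 1)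
  unfold besselICoeff
  positivity

theorem besselICoeff_le_inv_factorial (hν : -1 < ν) {n : ℕ} (hn : 2 ≤ n) :
    besselICoeff ν n ≤ 1 / n.factorial := by
  have h2 : (2 : ℝ) ≤ n + ν + 1 := by
    have : (2 : ℝ) ≤ n := mod_cast hn
    linarith
  have hΓ : 1 ≤ Real.Gamma (n + ν + 1) := by
    simpa using Real.Gamma_strictMonoOn_Ici.monotoneOn (mem_Ici.2 le_rfl) (mem_Ici.2 h2) h2
  unfold besselICoeff
  gcongr
  exact le_mul_of_one_le_right (by positivity) hΓ

theorem summable_norm_besselICoeff_mul_pow (hν : -1 < ν) (r : ℝ) :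
    Summable fun n => ‖besselICoeff ν n‖ * r ^ n := by
  refine .of_norm_bounded_eventually_nat (Real.summable_pow_div_factorial |r|) ?_
  filter_upwards [eventually_ge_atTop 2] with n hn
  rw [norm_mul, norm_norm, norm_pow, Real.norm_of_nonneg (besselICoeff_pos hν n).le,
    Real.norm_eq_abs, div_eq_mul_one_div, mul_comm]
  gcongr
  exact besselICoeff_le_inv_factorial hν hn

theorem besselI_eq_tsum_mul_cpow {z : ℂ} (hz : z ≠ 0) :
    besselI ν z = (∑' n, (besselICoeff ν n : ℂ) * ((z / 2) ^ 2) ^ n) * (z / 2) ^ (ν : ℂ) := by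
  rw [besselI, ← tsum_mul_right]
  refine tsum_congr fun n => ?_
  have hcoeff : 1 / ((n.factorial : ℂ) * Gamma (n + ν + 1)) = besselICoeff ν n := by
    rw [show (n : ℂ) + ν + 1 = ((n + ν + 1 : ℝ) : ℂ) by push_cast; ring, Complex.Gamma_ofReal,
      besselICoeff]
    push_cast
    ring
  rw [hcoeff, show 2 * (n : ℂ) + ν = (2 * n : ℕ) + ν by push_cast; ring,
    cpow_add _ _ (div_ne_zero hz two_ne_zero), cpow_natCast, pow_mul]
  ring

theorem mul_deriv_besselI (hν : -1 < ν) {z : ℂ} (hz : z ∈ slitPlane) :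
    z * deriv (besselI ν) z =
      (ν * ∑' n, (besselICoeff ν n : ℂ) * ((z / 2) ^ 2) ^ n +
        2 * ∑' n, n * (besselICoeff ν n : ℂ) * ((z / 2) ^ 2) ^ n) * (z / 2) ^ (ν : ℂ) := by
  have hz0 : z ≠ 0 := slitPlane_ne_zero hz
  have hz2 : z / 2 ≠ 0 := div_ne_zero hz0 two_ne_zero
  have hc : ∀ r : ℝ, Summable fun n => ‖(besselICoeff ν n : ℂ)‖ * r ^ n := by
    simpa only [Complex.norm_real] using summable_norm_besselICoeff_mul_pow hν
  have hsq : HasDerivAt (fun w : ℂ => (w / 2) ^ 2) (z / 2) z :=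
    ((hasDerivAt_pow 2 _).comp z ((hasDerivAt_id z).div_const 2)).congr_deriv (by norm_num; ring)
  have hpow : HasDerivAt (fun w : ℂ => (w / 2) ^ (ν : ℂ))
      (ν * (z / 2) ^ ((ν : ℂ) - 1) * (1 / 2)) z := by
    refine ((hasDerivAt_id z).div_const 2).cpow_const ?_
    rw [mem_slitPlane_iff] at hz ⊢
    simpa using hz
  have hI : HasDerivAt (besselI ν) _ z :=
    (((hasDerivAt_tsum_mul_pow hc _).comp z hsq).mul hpow).congr_of_eventuallyEq <| by
      filter_upwards [isOpen_ne.mem_nhds hz0] with w hw using besselI_eq_tsum_mul_cpow hw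
  rw [hI.deriv, Function.comp_apply, ← mul_tsum_mul_natCast_mul_pow_sub_one, cpow_sub _ _ hz2,
    cpow_one]
  generalize ∑' n, (besselICoeff ν n : ℂ) * (n * ((z / 2) ^ 2) ^ (n - 1)) = D
  generalize ∑' n, (besselICoeff ν n : ℂ) * ((z / 2) ^ 2) ^ n = E
  field_simp
  ring

theorem besselI_ofReal {r : ℝ} (hr : 0 < r) :
    besselI ν r = ((∑' n, besselICoeff ν n * (r ^ 2 / 4) ^ n : ℝ) : ℂ) * (r / 2 : ℂ) ^ (ν : ℂ) := by
  rw [besselI_eq_tsum_mul_cpow (ofReal_ne_zero.2 hr.ne'), show ((r : ℂ) / 2) ^ 2 = ((r ^ 2 / 4 : ℝ) : ℂ) by push_cast; ring]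
  push_cast
  rfl

theorem ofReal_mul_deriv_besselI (hν : -1 < ν) {r : ℝ} (hr : 0 < r) :
    r * deriv (besselI ν) r = ((ν * ∑' n, besselICoeff ν n * (r ^ 2 / 4) ^ n +
      2 * ∑' n, n * besselICoeff ν n * (r ^ 2 / 4) ^ n : ℝ) : ℂ) * (r / 2 : ℂ) ^ (ν : ℂ) := by
  rw [mul_deriv_besselI hν (ofReal_mem_slitPlane.2 hr), show ((r : ℂ) / 2) ^ 2 = ((r ^ 2 / 4 : ℝ) : ℂ) by push_cast; ring]
  push_cast
  rfl

theorem mul_deriv_besselI_div_besselI (hν : -1 < ν) {r : ℝ} (hr : 0 < r) :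
    r * deriv (besselI ν) r / besselI ν r =
      ((ν + 2 * indexMean (besselICoeff ν) (r ^ 2 / 4) : ℝ) : ℂ) := by
  have hS := tsum_mul_pow_pos (besselICoeff_pos hν) (summable_norm_besselICoeff_mul_pow hν)
    (by positivity : 0 ≤ r ^ 2 / 4)
  have hpow : (r / 2 : ℂ) ^ (ν : ℂ) ≠ 0 := by
    rw [cpow_ne_zero_iff]
    left
    exact div_ne_zero (ofReal_ne_zero.2 hr.ne') two_ne_zero
  rw [ofReal_mul_deriv_besselI hν hr, besselI_ofReal hr, mul_div_mul_right _ _ hpow,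
    ← ofReal_div, indexMean]
  congr 1
  field_simp

theorem besselI_ofReal_ne_zero (hν : -1 < ν) {r : ℝ} (hr : 0 < r) : besselI ν r ≠ 0 := by
  rw [besselI_ofReal hr]
  refine mul_ne_zero (ofReal_ne_zero.2 ?_) ?_
  · exact (tsum_mul_pow_pos (besselICoeff_pos hν) (summable_norm_besselICoeff_mul_pow hν)
      (by positivity)).ne'
  · rw [cpow_ne_zero_iff]
    exact .inl (div_ne_zero (ofReal_ne_zero.2 hr.ne') two_ne_zero)

theorem ofReal_mul_deriv_besselI_sub_mul_eq_zero_iff (hν : -1 < ν) {r : ℝ} (hr : 0 < r) (c : ℝ) :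
    r * deriv (besselI ν) r - c * besselI ν r = 0 ↔
      ν + 2 * indexMean (besselICoeff ν) (r ^ 2 / 4) = c := by
  have hI := besselI_ofReal_ne_zero hν hr
  rw [← div_mul_cancel₀ (r * deriv (besselI ν) r) hI, mul_deriv_besselI_div_besselI hν hr,
    ← sub_mul, mul_eq_zero, or_iff_left hI, ← ofReal_sub, ofReal_eq_zero, sub_eq_zero]

end BesselI

theorem existsUnique_pos_eq_zero_of_strictMonoOn {f : ℝ → ℝ} {l : ℝ}
    (hmono : StrictMonoOn f (Ioi 0)) (hcont : ContinuousOn f (Ioi 0))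
    (hzero : Tendsto f (𝓝[>] 0) (𝓝 l)) (hl : l < 0) (htop : Tendsto f atTop atTop) :
    ∃! r, 0 < r ∧ f r = 0 := by
  obtain ⟨a, hfa, ha⟩ := ((hzero.eventually (gt_mem_nhds hl)).and self_mem_nhdsWithin).exists
  obtain ⟨b, hfb, hab⟩ := ((htop.eventually_gt_atTop 0).and (eventually_gt_atTop a)).exists
  obtain ⟨c, hc, hfc⟩ := intermediate_value_Icc hab.le
    (hcont.mono fun x hx => lt_of_lt_of_le ha hx.1) ⟨hfa.le, hfb.le⟩
  have hc0 : 0 < c := lt_of_lt_of_le ha hc.1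
  exact ⟨c, ⟨hc0, hfc⟩, fun r ⟨hr, hfr⟩ => hmono.injOn hr hc0 (hfr.trans hfc.symm)⟩

theorem exists_unique_root_and_mono_general (ν β : ℝ) (hν₁ : -1 < ν) (hν₀ : ν < 0)
    (hβ₁ : β < 1) :
    (∃! r : ℝ, 0 < r ∧
      (r : ℂ) * deriv (besselI ν) (r : ℂ) - ((β * ν : ℝ) : ℂ) * besselI ν (r : ℂ) = 0) ∧
    StrictMonoOn
      (fun r : ℝ => ((r : ℂ) * deriv (besselI ν) (r : ℂ) / besselI ν (r : ℂ)).re - β * ν)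
      (Set.Ioi 0) ∧
    Filter.Tendsto
      (fun r : ℝ => ((r : ℂ) * deriv (besselI ν) (r : ℂ) / besselI ν (r : ℂ)).re - β * ν)
      (nhdsWithin 0 (Set.Ioi 0)) (nhds (ν * (1 - β))) ∧
    ν * (1 - β) < 0 ∧
    Filter.Tendsto
      (fun r : ℝ => ((r : ℂ) * deriv (besselI ν) (r : ℂ) / besselI ν (r : ℂ)).re - β * ν)
      Filter.atTop Filter.atTop := by
  have hc_pos := besselICoeff_pos hν₁
  have hc := summable_norm_besselICoeff_mul_pow hν₁
  set φ : ℝ → ℝ := fun r => indexMean (besselICoeff ν) (r ^ 2 / 4)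
  set q : ℝ → ℝ := fun r => ν * (1 - β) + 2 * φ r
  have hq : EqOn (fun r : ℝ => ((r : ℂ) * deriv (besselI ν) r / besselI ν r).re - β * ν) q
      (Ioi 0) := fun r hr => by
    simp only [q, φ, mul_deriv_besselI_div_besselI hν₁ hr, ofReal_re]
    ring
  have hsq : StrictMonoOn (fun r : ℝ => r ^ 2 / 4) (Ioi 0) := fun x hx y _ hxy => by
    have : x ^ 2 < y ^ 2 := pow_lt_pow_left₀ hxy (le_of_lt hx) two_ne_zero
    linarith
  have hφ_cont (r : ℝ) : ContinuousAt φ r :=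
    (continuousAt_indexMean hc_pos hc (by positivity)).comp (by fun_prop)
  have hq_mono : StrictMonoOn q (Ioi 0) := fun x hx y hy hxy => by
    simpa [q] using ((strictMonoOn_indexMean hc_pos hc).comp hsq
      fun r _ => mem_Ici.2 (by positivity)) hx hy hxy
  have hq_zero : Tendsto q (𝓝[>] 0) (𝓝 (ν * (1 - β))) := by
    simpa [φ, indexMean_zero] using
      (((hφ_cont 0).tendsto.mono_left nhdsWithin_le_nhds).const_mul 2).const_add (ν * (1 - β))
  have hq_top : Tendsto q atTop atTop := tendsto_atTop_add_const_left _ _ <|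
    ((tendsto_indexMean_atTop hc_pos hc).comp <|
      (tendsto_pow_atTop two_ne_zero).atTop_div_const (by norm_num)).const_mul_atTop two_pos
  have hneg : ν * (1 - β) < 0 := mul_neg_of_neg_of_pos hν₀ (by linarith)
  refine ⟨?_, hq_mono.congr hq.symm, hq_zero.congr' (eventuallyEq_nhdsWithin_of_eqOn hq.symm),
    hneg, hq_top.congr' ((eventually_gt_atTop 0).mono fun r hr => (hq hr).symm)⟩
  refine (existsUnique_congr fun r => and_congr_right fun hr => ?_).2
    (existsUnique_pos_eq_zero_of_strictMonoOn hq_mono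
      (fun r _ => ((hφ_cont r).const_mul 2 |>.const_add _).continuousWithinAt) hq_zero hneg hq_top)
  rw [ofReal_mul_deriv_besselI_sub_mul_eq_zero_iff hν₁ hr]
  simp only [q, φ]
  constructor <;> intro h <;> linarith

/-- For `ν ∈ (-1,0)` and `0 ≤ β < 1`, the equation
`r I_ν'(r) - βν I_ν(r) = 0` has exactly one root in `(0,∞)`; moreover
`q_ν(r) = r I_ν'(r)/I_ν(r) - βν` is strictly increasing on `(0,∞)`, tends to
`ν(1-β) < 0` as `r → 0⁺`, and tends to `+∞` as `r → ∞`. -/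
theorem exists_unique_root_and_mono (ν β : ℝ) (hν₁ : -1 < ν) (hν₀ : ν < 0)
    (hβ₀ : 0 ≤ β) (hβ₁ : β < 1) :
    (∃! r : ℝ, 0 < r ∧
      (r : ℂ) * deriv (besselI ν) (r : ℂ) - ((β * ν : ℝ) : ℂ) * besselI ν (r : ℂ) = 0) ∧
    StrictMonoOn
      (fun r : ℝ => ((r : ℂ) * deriv (besselI ν) (r : ℂ) / besselI ν (r : ℂ)).re - β * ν)
      (Set.Ioi 0) ∧
    Filter.Tendsto
      (fun r : ℝ => ((r : ℂ) * deriv (besselI ν) (r : ℂ) / besselI ν (r : ℂ)).re - β * ν)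
      (nhdsWithin 0 (Set.Ioi 0)) (nhds (ν * (1 - β))) ∧
    ν * (1 - β) < 0 ∧
    Filter.Tendsto
      (fun r : ℝ => ((r : ℂ) * deriv (besselI ν) (r : ℂ) / besselI ν (r : ℂ)).re - β * ν)
      Filter.atTop Filter.atTop :=
  exists_unique_root_and_mono_general ν β hν₁ hν₀ hβ₁
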